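/- arXiv:1909.06871 — 5 statements merged into one kernel-verified Lean document; each statement's English description precedes it below -/
import Mathlib

section
/- Let M = (A,B,C,D) be a discrete-time system and let X ∈ ℂ^{n×n} be Hermitian. For every z ∈ ℂ with z ≠ 0 such that zIₙ − A and z⁻¹Iₙ − Aᴴ are invertible, one has Bᴴ(z⁻¹Iₙ − Aᴴ)⁻¹Cᴴ + Dᴴ + C(zIₙ − A)⁻¹B + D = [Bᴴ(z⁻¹Iₙ − Aᴴ)⁻¹ I_m] · W(X,M) · [(zIₙ − A)⁻¹B ; I_m]. In particular, the right-hand side is independent of the choice of the Hermitian matrix X. -/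
open Matrix

/-! With `P = zI − A` and `Q = z⁻¹I − Aᴴ`, the identity `z⁻¹ z = 1` gives
`X − AᴴXA = QXP + QXA + AᴴXP`. Sandwiching the `(1,1)` block of `W(X,M)` between `BᴴQ⁻¹` and
`P⁻¹B` therefore produces `BᴴXB + BᴴXAP⁻¹B + BᴴQ⁻¹AᴴXB`, which cancels exactly the `X`-terms
coming from the other three blocks, leaving `BᴴQ⁻¹Cᴴ + Dᴴ + CP⁻¹B + D`. -/

/-- The Kalman–Yakubovich–Popov matrix `W(X,M)` of a discrete-time system `M = (A,B,C,D)`. -/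
noncomputable def WK {n m : ℕ} (X A : Matrix (Fin n) (Fin n) ℂ)
    (B : Matrix (Fin n) (Fin m) ℂ) (C : Matrix (Fin m) (Fin n) ℂ)
    (D : Matrix (Fin m) (Fin m) ℂ) :
    Matrix (Fin n ⊕ Fin m) (Fin n ⊕ Fin m) ℂ :=
  fromBlocks (X - Aᴴ * X * A) (Cᴴ - Aᴴ * X * B) (C - Bᴴ * X * A) (Dᴴ + D - Bᴴ * X * B)

theorem sub_mul_mul_eq_of_mul_eq_one {K R : Type*} [CommRing K] [Ring R] [Algebra K R]
    {w z : K} (h : w * z = 1) (X A A' : R) :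
    X - A' * X * A = (w • 1 - A') * X * (z • 1 - A) + (w • 1 - A') * X * A
      + A' * X * (z • 1 - A) := by
  simp only [sub_mul, mul_sub, smul_mul_assoc, mul_smul_comm, one_mul, mul_one, smul_sub,
    smul_smul, mul_comm z w, h, one_smul]
  abel

theorem fromCols_mul_fromBlocks_mul_fromRows {R l m₁ m₂ n₁ n₂ k : Type*} [Semiring R]
    [Fintype m₁] [Fintype m₂] [Fintype n₁] [Fintype n₂]
    (U₁ : Matrix l m₁ R) (U₂ : Matrix l m₂ R) (B₁₁ : Matrix m₁ n₁ R) (B₁₂ : Matrix m₁ n₂ R)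
    (B₂₁ : Matrix m₂ n₁ R) (B₂₂ : Matrix m₂ n₂ R) (V₁ : Matrix n₁ k R) (V₂ : Matrix n₂ k R) :
    fromCols U₁ U₂ * fromBlocks B₁₁ B₁₂ B₂₁ B₂₂ * fromRows V₁ V₂ =
      (U₁ * B₁₁ + U₂ * B₂₁) * V₁ + (U₁ * B₁₂ + U₂ * B₂₂) * V₂ := by
  rw [fromCols_mul_fromBlocks, fromCols_mul_fromRows]

theorem stmt0_general {n m : ℕ} (A : Matrix (Fin n) (Fin n) ℂ) (B : Matrix (Fin n) (Fin m) ℂ)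
    (C : Matrix (Fin m) (Fin n) ℂ) (D : Matrix (Fin m) (Fin m) ℂ)
    (X : Matrix (Fin n) (Fin n) ℂ)
    (z : ℂ) (hz : z ≠ 0)
    (h1 : IsUnit (z • (1 : Matrix (Fin n) (Fin n) ℂ) - A))
    (h2 : IsUnit (z⁻¹ • (1 : Matrix (Fin n) (Fin n) ℂ) - Aᴴ)) :
    Bᴴ * (z⁻¹ • (1 : Matrix (Fin n) (Fin n) ℂ) - Aᴴ)⁻¹ * Cᴴ + Dᴴ
      + C * (z • (1 : Matrix (Fin n) (Fin n) ℂ) - A)⁻¹ * B + D =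
    fromCols (Bᴴ * (z⁻¹ • (1 : Matrix (Fin n) (Fin n) ℂ) - Aᴴ)⁻¹)
        (1 : Matrix (Fin m) (Fin m) ℂ)
      * WK X A B C D
      * fromRows ((z • (1 : Matrix (Fin n) (Fin n) ℂ) - A)⁻¹ * B)
        (1 : Matrix (Fin m) (Fin m) ℂ) := by
  set P := z • (1 : Matrix (Fin n) (Fin n) ℂ) - A
  set Q := z⁻¹ • (1 : Matrix (Fin n) (Fin n) ℂ) - Aᴴ
  have hPB : P * (P⁻¹ * B) = B :=
    Matrix.mul_nonsing_inv_cancel_left P B ((isUnit_iff_isUnit_det P).mp h1)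
  have hQ (Y : Matrix (Fin n) (Fin m) ℂ) : Q⁻¹ * (Q * Y) = Y :=
    Matrix.nonsing_inv_mul_cancel_left Q Y ((isUnit_iff_isUnit_det Q).mp h2)
  have hdiag : X - Aᴴ * X * A = Q * X * P + Q * X * A + Aᴴ * X * P :=
    sub_mul_mul_eq_of_mul_eq_one (inv_mul_cancel₀ hz) X A Aᴴ
  rw [WK, fromCols_mul_fromBlocks_mul_fromRows, hdiag]
  simp only [Matrix.mul_one, Matrix.one_mul, Matrix.mul_add, Matrix.add_mul, Matrix.mul_sub,
    Matrix.sub_mul, Matrix.mul_assoc, hPB, hQ]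
  abel

/-- for any Hermitian `X` and any `z ≠ 0` with `zI − A` and `z⁻¹I − Aᴴ`
invertible, `Φ(z) = [Bᴴ(z⁻¹I − Aᴴ)⁻¹  I] · W(X,M) · [(zI − A)⁻¹B ; I]`. -/
theorem stmt0 {n m : ℕ} (A : Matrix (Fin n) (Fin n) ℂ) (B : Matrix (Fin n) (Fin m) ℂ)
    (C : Matrix (Fin m) (Fin n) ℂ) (D : Matrix (Fin m) (Fin m) ℂ)
    (X : Matrix (Fin n) (Fin n) ℂ) (hX : X.IsHermitian)
    (z : ℂ) (hz : z ≠ 0)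
    (h1 : IsUnit (z • (1 : Matrix (Fin n) (Fin n) ℂ) - A))
    (h2 : IsUnit (z⁻¹ • (1 : Matrix (Fin n) (Fin n) ℂ) - Aᴴ)) :
    Bᴴ * (z⁻¹ • (1 : Matrix (Fin n) (Fin n) ℂ) - Aᴴ)⁻¹ * Cᴴ + Dᴴ
      + C * (z • (1 : Matrix (Fin n) (Fin n) ℂ) - A)⁻¹ * B + D =
    fromCols (Bᴴ * (z⁻¹ • (1 : Matrix (Fin n) (Fin n) ℂ) - Aᴴ)⁻¹)
        (1 : Matrix (Fin m) (Fin m) ℂ)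
      * WK X A B C D
      * fromRows ((z • (1 : Matrix (Fin n) (Fin n) ℂ) - A)⁻¹ * B)
        (1 : Matrix (Fin m) (Fin m) ℂ) :=
  stmt0_general A B C D X z hz h1 h2
end

section
/- Let M = (A,B,C,D) be a discrete-time system and let X ∈ ℂ^{n×n} be Hermitian with Dᴴ + D − BᴴXB invertible. Suppose X solves the discrete-time algebraic Riccati equation X − AᴴXA − (Cᴴ − AᴴXB)(Dᴴ + D − BᴴXB)⁻¹(C − BᴴXA) = 0. Set F := (Dᴴ + D − BᴴXB)⁻¹(C − BᴴXA), A_F := A − BF, and Û := [−X ; Iₙ ; −F] ∈ ℂ^{(2n+m)×n}. Then the extended invariant-subspace relation [[0, A, B],[−Iₙ, 0, Cᴴ],[0, C, Dᴴ + D]] · Û = [[0, Iₙ, 0],[−Aᴴ, 0, 0],[−Bᴴ, 0, 0]] · Û · A_F holds. -/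
/-!
Write `S = Dᴴ + D − BᴴXB`, so that `S F = C − BᴴXA`. Multiplying out, the three block rows of the
relation read `A − BF = A_F`, `X − CᴴF = AᴴX A_F` and `C − (Dᴴ + D)F = BᴴX A_F`. The first is the
definition of `A_F`, the second is the Riccati equation `X = AᴴXA + (Cᴴ − AᴴXB)F`, and the third is
`S F = C − BᴴXA`.
-/

open Matrix

namespace Matrix

theorem fromRows_add {α m₁ m₂ n : Type*} [Add α] (A₁ B₁ : Matrix m₁ n α) (A₂ B₂ : Matrix m₂ n α) :
    fromRows A₁ A₂ + fromRows B₁ B₂ = fromRows (A₁ + B₁) (A₂ + B₂) := by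
  ext (i | i) j <;> rfl

variable {R ι κ : Type*} [Ring R] [Fintype ι] [Fintype κ] [DecidableEq ι]

theorem fromBlocks_mul_fromRows_neg_one_neg (A X : Matrix ι ι R) (B : Matrix ι κ R)
    (C F : Matrix κ ι R) (P : Matrix ι κ R) (E : Matrix κ κ R) :
    fromBlocks (0 : Matrix ι ι R) (fromCols A B) (fromRows (-1 : Matrix ι ι R) (0 : Matrix κ ι R))
        (fromBlocks (0 : Matrix ι ι R) P C E) * fromRows (-X) (fromRows (1 : Matrix ι ι R) (-F)) =
      fromRows (A - B * F) (fromRows (X - P * F) (C - E * F)) := by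
  simp only [fromBlocks_mul_fromRows, fromCols_mul_fromRows, fromRows_mul, fromRows_neg,
    fromRows_add, Matrix.zero_mul, Matrix.mul_one, Matrix.mul_neg, Matrix.neg_mul, Matrix.one_mul,
    neg_neg, neg_zero, zero_add, sub_eq_add_neg]

theorem fromBlocks_mul_fromRows_one_mul (X AF P : Matrix ι ι R) (F Q : Matrix κ ι R) :
    fromBlocks (0 : Matrix ι ι R) (fromCols (1 : Matrix ι ι R) (0 : Matrix ι κ R))
        (fromRows (-P) (-Q)) (0 : Matrix (ι ⊕ κ) (ι ⊕ κ) R) *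
        fromRows (-X) (fromRows (1 : Matrix ι ι R) (-F)) * AF =
      fromRows AF (fromRows (P * X * AF) (Q * X * AF)) := by
  simp only [fromBlocks_mul_fromRows, fromCols_mul_fromRows, fromRows_mul, fromRows_neg,
    Matrix.zero_mul, Matrix.mul_one, Matrix.mul_neg, Matrix.neg_mul, Matrix.one_mul, neg_neg,
    neg_zero, zero_add, add_zero]

end Matrix

theorem stmt2_general {n m : ℕ} (A : Matrix (Fin n) (Fin n) ℂ) (B : Matrix (Fin n) (Fin m) ℂ)
    (C : Matrix (Fin m) (Fin n) ℂ) (D : Matrix (Fin m) (Fin m) ℂ)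
    (X : Matrix (Fin n) (Fin n) ℂ)
    (hinv : IsUnit (Dᴴ + D - Bᴴ * X * B))
    (hRicc : X - Aᴴ * X * A
        - (Cᴴ - Aᴴ * X * B) * (Dᴴ + D - Bᴴ * X * B)⁻¹ * (C - Bᴴ * X * A) = 0)
    (F : Matrix (Fin m) (Fin n) ℂ) (hF : F = (Dᴴ + D - Bᴴ * X * B)⁻¹ * (C - Bᴴ * X * A))
    (AF : Matrix (Fin n) (Fin n) ℂ) (hAF : AF = A - B * F)
    (U : Matrix (Fin n ⊕ (Fin n ⊕ Fin m)) (Fin n) ℂ)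
    (hU : U = fromRows (-X) (fromRows (1 : Matrix (Fin n) (Fin n) ℂ) (-F))) :
    fromBlocks (0 : Matrix (Fin n) (Fin n) ℂ) (fromCols A B)
        (fromRows (-(1 : Matrix (Fin n) (Fin n) ℂ)) (0 : Matrix (Fin m) (Fin n) ℂ))
        (fromBlocks (0 : Matrix (Fin n) (Fin n) ℂ) Cᴴ C (Dᴴ + D)) * U
      = fromBlocks (0 : Matrix (Fin n) (Fin n) ℂ)
          (fromCols (1 : Matrix (Fin n) (Fin n) ℂ) (0 : Matrix (Fin n) (Fin m) ℂ))
          (fromRows (-Aᴴ) (-Bᴴ))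
          (0 : Matrix (Fin n ⊕ Fin m) (Fin n ⊕ Fin m) ℂ) * U * AF := by
  have hSF : (Dᴴ + D - Bᴴ * X * B) * F = C - Bᴴ * X * A := by
    rw [hF, mul_nonsing_inv_cancel_left _ _ ((isUnit_iff_isUnit_det _).mp hinv)]
  rw [Matrix.mul_assoc _ _ (C - Bᴴ * X * A), ← hF] at hRicc
  subst hU hAF
  rw [fromBlocks_mul_fromRows_neg_one_neg, fromBlocks_mul_fromRows_one_mul]
  refine congrArg₂ fromRows rfl (congrArg₂ fromRows ?_ ?_)
  · rw [← sub_eq_zero, ← hRicc]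
    simp only [Matrix.mul_sub, Matrix.sub_mul, Matrix.mul_assoc]
    abel
  · rw [← sub_eq_zero, ← neg_eq_zero, ← sub_eq_zero.mpr hSF]
    simp only [Matrix.mul_sub, Matrix.sub_mul, Matrix.add_mul, Matrix.mul_assoc]
    abel

/-- if the Hermitian matrix `X` solves the discrete-time algebraic Riccati
equation (with `Dᴴ + D − BᴴXB` invertible), then with `F = (Dᴴ+D−BᴴXB)⁻¹(C−BᴴXA)`,
`A_F = A − BF` and `Û = [−X ; I ; −F]`, the extended invariant-subspace relation
`[[0,A,B],[−I,0,Cᴴ],[0,C,Dᴴ+D]]·Û = [[0,I,0],[−Aᴴ,0,0],[−Bᴴ,0,0]]·Û·A_F` holds. -/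
theorem stmt2 {n m : ℕ} (A : Matrix (Fin n) (Fin n) ℂ) (B : Matrix (Fin n) (Fin m) ℂ)
    (C : Matrix (Fin m) (Fin n) ℂ) (D : Matrix (Fin m) (Fin m) ℂ)
    (X : Matrix (Fin n) (Fin n) ℂ) (hX : X.IsHermitian)
    (hinv : IsUnit (Dᴴ + D - Bᴴ * X * B))
    (hRicc : X - Aᴴ * X * A
        - (Cᴴ - Aᴴ * X * B) * (Dᴴ + D - Bᴴ * X * B)⁻¹ * (C - Bᴴ * X * A) = 0)
    (F : Matrix (Fin m) (Fin n) ℂ) (hF : F = (Dᴴ + D - Bᴴ * X * B)⁻¹ * (C - Bᴴ * X * A))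
    (AF : Matrix (Fin n) (Fin n) ℂ) (hAF : AF = A - B * F)
    (U : Matrix (Fin n ⊕ (Fin n ⊕ Fin m)) (Fin n) ℂ)
    (hU : U = fromRows (-X) (fromRows (1 : Matrix (Fin n) (Fin n) ℂ) (-F))) :
    fromBlocks (0 : Matrix (Fin n) (Fin n) ℂ) (fromCols A B)
        (fromRows (-(1 : Matrix (Fin n) (Fin n) ℂ)) (0 : Matrix (Fin m) (Fin n) ℂ))
        (fromBlocks (0 : Matrix (Fin n) (Fin n) ℂ) Cᴴ C (Dᴴ + D)) * U
      = fromBlocks (0 : Matrix (Fin n) (Fin n) ℂ)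
          (fromCols (1 : Matrix (Fin n) (Fin n) ℂ) (0 : Matrix (Fin n) (Fin m) ℂ))
          (fromRows (-Aᴴ) (-Bᴴ))
          (0 : Matrix (Fin n ⊕ Fin m) (Fin n ⊕ Fin m) ℂ) * U * AF :=
  stmt2_general A B C D X hinv hRicc F hF AF hAF U hU
end

section
/- Let F₁, F₂ ∈ ℂ^{p×q} be nonzero matrices and define g(γ) := λ_max(γ²·F₁F₁ᴴ + γ⁻²·F₂F₂ᴴ) for γ ∈ (0,∞). Then g is unimodal: there exists γ̲ > 0 such that g is nonincreasing on (0, γ̲], nondecreasing on [γ̲, ∞), and g attains its global minimum over (0,∞) at γ̲. -/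
/-!
For a unit vector `x` the Rayleigh quotient of `γ²F₁F₁ᴴ + γ⁻²F₂F₂ᴴ` is
`γ²‖F₁ᴴx‖² + γ⁻²‖F₂ᴴx‖²`, a convex function of `γ > 0`; hence `g`, their supremum, is convex
(and so continuous) on `(0, ∞)`. Testing with a unit vector outside `ker F₁ᴴ` shows `g γ ≥ c γ²`
with `c > 0`, and one outside `ker F₂ᴴ` shows `g γ ≥ c' γ⁻²`, so `g` tends to `∞` at both ends of
`(0, ∞)` and attains its minimum at some `γ̲`. A convex function of one variable is nonincreasing
to the left of a minimiser and nondecreasing to its right.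
-/

open Matrix

/-- The largest eigenvalue of a Hermitian matrix, expressed as the supremum of the
Rayleigh quotient over unit vectors. -/
noncomputable def lamMax {k : ℕ} (A : Matrix (Fin k) (Fin k) ℂ) : ℝ :=
  ⨆ x : {x : EuclideanSpace ℂ (Fin k) // ‖x‖ = 1},
    (inner ℂ ((x : EuclideanSpace ℂ (Fin k))) (Matrix.toEuclideanLin A x) : ℂ).re

open Set Filter Topology

theorem ConvexOn.ciSup {ι E : Type*} [AddCommMonoid E] [Module ℝ E] {s : Set E}
    {f : ι → E → ℝ} (hs : Convex ℝ s) (hf : ∀ i, ConvexOn ℝ s (f i))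
    (hbdd : ∀ x ∈ s, BddAbove (range fun i => f i x)) :
    ConvexOn ℝ s fun x => ⨆ i, f i x := by
  rcases isEmpty_or_nonempty ι with hι | hι
  · simpa only [Real.iSup_of_isEmpty] using convexOn_const 0 hs
  refine ⟨hs, fun x hx y hy a b ha hb hab => ciSup_le fun i => ?_⟩
  calc f i (a • x + b • y) ≤ a • f i x + b • f i y := (hf i).2 hx hy ha hb hab
    _ ≤ a • (⨆ j, f j x) + b • ⨆ j, f j y :=
      add_le_add (smul_le_smul_of_nonneg_left (le_ciSup (hbdd x hx) i) ha)
        (smul_le_smul_of_nonneg_left (le_ciSup (hbdd y hy) i) hb)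

section

variable {𝕜 β : Type*} [Field 𝕜] [LinearOrder 𝕜] [IsStrictOrderedRing 𝕜]
  [AddCommGroup β] [LinearOrder β] [IsOrderedAddMonoid β] [Module 𝕜 β]
  [IsStrictOrderedModule 𝕜 β] {s : Set 𝕜} {f : 𝕜 → β} {x₀ : 𝕜}

theorem ConvexOn.antitoneOn_of_isMinOn (hf : ConvexOn 𝕜 s f) (hmin : IsMinOn f s x₀)
    (hx₀ : x₀ ∈ s) : AntitoneOn f (s ∩ Iic x₀) := fun _ hx _ hy hxy =>
  (hf.le_max_of_mem_Icc hx.1 hx₀ ⟨hxy, hy.2⟩).trans (max_le le_rfl (hmin hx.1))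

theorem ConvexOn.monotoneOn_of_isMinOn (hf : ConvexOn 𝕜 s f) (hmin : IsMinOn f s x₀)
    (hx₀ : x₀ ∈ s) : MonotoneOn f (s ∩ Ici x₀) := fun _ hx _ hy hxy =>
  (hf.le_max_of_mem_Icc hx₀ hy.1 ⟨hx.2, hxy⟩).trans (max_le (hmin hy.1) le_rfl)

end

theorem exists_isMinOn_Ioi_of_tendsto {f : ℝ → ℝ} (hf : ContinuousOn f (Ioi 0))
    (h0 : Tendsto f (𝓝[>] 0) atTop) (htop : Tendsto f atTop atTop) :
    ∃ x₀ ∈ Ioi 0, IsMinOn f (Ioi 0) x₀ := by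
  obtain ⟨ε, hε, hε1⟩ : ∃ ε > 0, ∀ t ∈ Ioo 0 ε, f 1 ≤ f t :=
    (mem_nhdsGT_iff_exists_Ioo_subset' one_pos).1 (h0.eventually_ge_atTop (f 1))
  obtain ⟨T, hT⟩ := eventually_atTop.1 (htop.eventually_ge_atTop (f 1))
  set K := Icc (min ε 1) (max T 1)
  have hK : K ⊆ Ioi 0 := fun t ht => (lt_min hε one_pos).trans_le ht.1
  have h1K : 1 ∈ K := ⟨min_le_right ε 1, le_max_right T 1⟩
  obtain ⟨x₀, hx₀, hmin⟩ := isCompact_Icc.exists_isMinOn ⟨1, h1K⟩ (hf.mono hK)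
  refine ⟨x₀, hK hx₀, fun t (ht : 0 < t) => ?_⟩
  rcases lt_or_ge t (min ε 1) with htε | htε
  · exact (hmin h1K).trans (hε1 t ⟨ht, htε.trans_le (min_le_left ε 1)⟩)
  rcases le_or_gt t (max T 1) with htT | htT
  · exact hmin ⟨htε, htT⟩
  · exact (hmin h1K).trans (hT t (le_of_max_le_left htT.le))

theorem bddAbove_range_re_inner_toEuclideanLin {k : ℕ} (A : Matrix (Fin k) (Fin k) ℂ) :
    BddAbove (range fun x : {x : EuclideanSpace ℂ (Fin k) // ‖x‖ = 1} =>
      (inner ℂ (x : EuclideanSpace ℂ (Fin k)) (toEuclideanLin A x)).re) := by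
  refine ⟨‖(toEuclideanLin A).toContinuousLinearMap‖, ?_⟩
  rintro _ ⟨⟨x, hx⟩, rfl⟩
  calc (inner ℂ x (toEuclideanLin A x)).re ≤ ‖x‖ * ‖toEuclideanLin A x‖ :=
      re_inner_le_norm (𝕜 := ℂ) x _
    _ ≤ ‖x‖ * (‖(toEuclideanLin A).toContinuousLinearMap‖ * ‖x‖) :=
      mul_le_mul_of_nonneg_left ((toEuclideanLin A).toContinuousLinearMap.le_opNorm x)
        (norm_nonneg x)
    _ = _ := by rw [hx, one_mul, mul_one]

theorem re_inner_toEuclideanLin_mul_conjTranspose_self {m n : ℕ}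
    (F : Matrix (Fin m) (Fin n) ℂ) (x : EuclideanSpace ℂ (Fin m)) :
    (inner ℂ x (toEuclideanLin (F * Fᴴ) x)).re = ‖toEuclideanLin Fᴴ x‖ ^ 2 := by
  have hmul : toEuclideanLin (F * Fᴴ) x = toEuclideanLin F (toEuclideanLin Fᴴ x) := by
    simp [toLpLin_apply, mulVec_mulVec]
  have hadj : toEuclideanLin F = LinearMap.adjoint (toEuclideanLin Fᴴ) := by
    rw [← toEuclideanLin_conjTranspose_eq_adjoint, conjTranspose_conjTranspose]
  rw [hmul, hadj, LinearMap.adjoint_inner_right, inner_self_eq_norm_sq_to_K]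
  norm_cast

theorem re_inner_toEuclideanLin_smul_add_smul {k : ℕ} (s t : ℝ)
    (A B : Matrix (Fin k) (Fin k) ℂ) (x : EuclideanSpace ℂ (Fin k)) :
    (inner ℂ x (toEuclideanLin (s • A + t • B) x)).re
      = s * (inner ℂ x (toEuclideanLin A x)).re + t * (inner ℂ x (toEuclideanLin B x)).re := by
  simp only [← algebraMap_smul ℂ s A, ← algebraMap_smul ℂ t B, map_add, map_smul,
    LinearMap.add_apply, LinearMap.smul_apply, inner_add_right, inner_smul_right,
    Complex.add_re, Complex.coe_algebraMap, Complex.re_ofReal_mul]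

theorem exists_norm_eq_one_toEuclideanLin_ne_zero {m n : ℕ} {F : Matrix (Fin m) (Fin n) ℂ}
    (hF : F ≠ 0) : ∃ x : EuclideanSpace ℂ (Fin n), ‖x‖ = 1 ∧ toEuclideanLin F x ≠ 0 := by
  obtain ⟨v, hv⟩ : ∃ v, toEuclideanLin F v ≠ 0 := by
    by_contra! h
    exact hF (toEuclideanLin.injective (LinearMap.ext fun v => by simpa using h v))
  have hv0 : v ≠ 0 := fun h => hv (by simp [h])
  refine ⟨(‖v‖⁻¹ : ℂ) • v, norm_smul_inv_norm hv0, ?_⟩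
  rw [map_smul]
  exact smul_ne_zero (by simpa using hv0) hv

section ScaledGram

variable {p q : ℕ} (F₁ F₂ : Matrix (Fin p) (Fin q) ℂ)

noncomputable def scaledGramLamMax (γ : ℝ) : ℝ :=
  lamMax ((γ ^ 2) • (F₁ * F₁ᴴ) + ((γ⁻¹) ^ 2) • (F₂ * F₂ᴴ))

theorem re_inner_toEuclideanLin_smul_gram_add_smul_gram (s t : ℝ)
    (x : EuclideanSpace ℂ (Fin p)) :
    (inner ℂ x (toEuclideanLin (s • (F₁ * F₁ᴴ) + t • (F₂ * F₂ᴴ)) x)).re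
      = s * ‖toEuclideanLin F₁ᴴ x‖ ^ 2 + t * ‖toEuclideanLin F₂ᴴ x‖ ^ 2 := by
  rw [re_inner_toEuclideanLin_smul_add_smul, re_inner_toEuclideanLin_mul_conjTranspose_self,
    re_inner_toEuclideanLin_mul_conjTranspose_self]

theorem scaledGramLamMax_eq_iSup (γ : ℝ) :
    scaledGramLamMax F₁ F₂ γ = ⨆ x : {x : EuclideanSpace ℂ (Fin p) // ‖x‖ = 1},
      γ ^ 2 * ‖toEuclideanLin F₁ᴴ x‖ ^ 2 + (γ⁻¹) ^ 2 * ‖toEuclideanLin F₂ᴴ x‖ ^ 2 := by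
  simp only [scaledGramLamMax, lamMax, re_inner_toEuclideanLin_smul_gram_add_smul_gram]

theorem bddAbove_range_scaledGram (γ : ℝ) :
    BddAbove (range fun x : {x : EuclideanSpace ℂ (Fin p) // ‖x‖ = 1} =>
      γ ^ 2 * ‖toEuclideanLin F₁ᴴ x‖ ^ 2 + (γ⁻¹) ^ 2 * ‖toEuclideanLin F₂ᴴ x‖ ^ 2) := by
  simpa only [re_inner_toEuclideanLin_smul_gram_add_smul_gram] using
    bddAbove_range_re_inner_toEuclideanLin ((γ ^ 2) • (F₁ * F₁ᴴ) + ((γ⁻¹) ^ 2) • (F₂ * F₂ᴴ))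

theorem le_scaledGramLamMax (γ : ℝ) (x : {x : EuclideanSpace ℂ (Fin p) // ‖x‖ = 1}) :
    γ ^ 2 * ‖toEuclideanLin F₁ᴴ x‖ ^ 2 + (γ⁻¹) ^ 2 * ‖toEuclideanLin F₂ᴴ x‖ ^ 2
      ≤ scaledGramLamMax F₁ F₂ γ :=
  (scaledGramLamMax_eq_iSup F₁ F₂ γ).symm ▸ le_ciSup (bddAbove_range_scaledGram F₁ F₂ γ) x

theorem convexOn_sq_mul_add_inv_sq_mul {c d : ℝ} (hc : 0 ≤ c) (hd : 0 ≤ d) :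
    ConvexOn ℝ (Ioi 0) fun γ : ℝ => γ ^ 2 * c + (γ⁻¹) ^ 2 * d := by
  have hsq : ConvexOn ℝ (Ioi 0) fun γ : ℝ => γ ^ 2 :=
    (convexOn_pow 2).subset Ioi_subset_Ici_self (convex_Ioi 0)
  have hinv : ConvexOn ℝ (Ioi 0) fun γ : ℝ => (γ⁻¹) ^ 2 := by
    simpa only [_root_.zpow_neg, zpow_ofNat, inv_pow] using convexOn_zpow (𝕜 := ℝ) (-2)
  simpa only [Pi.add_def, smul_eq_mul, mul_comm] using (hsq.smul hc).add (hinv.smul hd)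

theorem convexOn_scaledGramLamMax : ConvexOn ℝ (Ioi 0) (scaledGramLamMax F₁ F₂) := by
  simp only [funext (scaledGramLamMax_eq_iSup F₁ F₂)]
  exact ConvexOn.ciSup (convex_Ioi 0)
    (fun _ => convexOn_sq_mul_add_inv_sq_mul (by positivity) (by positivity))
    (fun γ _ => bddAbove_range_scaledGram F₁ F₂ γ)

variable {F₁ F₂}

theorem tendsto_scaledGramLamMax_atTop (hF₁ : F₁ ≠ 0) :
    Tendsto (scaledGramLamMax F₁ F₂) atTop atTop := by
  obtain ⟨x, hx, hFx⟩ :=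
    exists_norm_eq_one_toEuclideanLin_ne_zero (conjTranspose_eq_zero.not.2 hF₁)
  have hpos : 0 < ‖toEuclideanLin F₁ᴴ x‖ ^ 2 := by positivity
  refine tendsto_atTop_mono (fun γ => ?_) ((tendsto_pow_atTop two_ne_zero).atTop_mul_const hpos)
  refine le_trans ?_ (le_scaledGramLamMax F₁ F₂ γ ⟨x, hx⟩)
  exact le_add_of_nonneg_right (by positivity)

theorem tendsto_scaledGramLamMax_nhdsGT_zero (hF₂ : F₂ ≠ 0) :
    Tendsto (scaledGramLamMax F₁ F₂) (𝓝[>] 0) atTop := by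
  obtain ⟨x, hx, hFx⟩ :=
    exists_norm_eq_one_toEuclideanLin_ne_zero (conjTranspose_eq_zero.not.2 hF₂)
  have hpos : 0 < ‖toEuclideanLin F₂ᴴ x‖ ^ 2 := by positivity
  refine tendsto_atTop_mono (fun γ => ?_)
    (((tendsto_pow_atTop two_ne_zero).comp tendsto_inv_nhdsGT_zero).atTop_mul_const hpos)
  refine le_trans ?_ (le_scaledGramLamMax F₁ F₂ γ ⟨x, hx⟩)
  exact le_add_of_nonneg_left (by positivity)

end ScaledGram

/-- for nonzero `F₁, F₂`, the function
`g(γ) = λ_max(γ²F₁F₁ᴴ + γ⁻²F₂F₂ᴴ)` is unimodal on `(0,∞)`: there is `γ̲ > 0` such that `g`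
is nonincreasing on `(0, γ̲]`, nondecreasing on `[γ̲, ∞)`, and `g` attains its global
minimum at `γ̲`. -/
theorem stmt4 {p q : ℕ} (F₁ F₂ : Matrix (Fin p) (Fin q) ℂ)
    (hF₁ : F₁ ≠ 0) (hF₂ : F₂ ≠ 0) :
    ∃ γmin : ℝ, 0 < γmin ∧
      (∀ γ₁ γ₂ : ℝ, 0 < γ₁ → γ₁ ≤ γ₂ → γ₂ ≤ γmin →
        lamMax ((γ₂ ^ 2) • (F₁ * F₁ᴴ) + ((γ₂⁻¹) ^ 2) • (F₂ * F₂ᴴ))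
          ≤ lamMax ((γ₁ ^ 2) • (F₁ * F₁ᴴ) + ((γ₁⁻¹) ^ 2) • (F₂ * F₂ᴴ)))
      ∧ (∀ γ₁ γ₂ : ℝ, γmin ≤ γ₁ → γ₁ ≤ γ₂ →
        lamMax ((γ₁ ^ 2) • (F₁ * F₁ᴴ) + ((γ₁⁻¹) ^ 2) • (F₂ * F₂ᴴ))
          ≤ lamMax ((γ₂ ^ 2) • (F₁ * F₁ᴴ) + ((γ₂⁻¹) ^ 2) • (F₂ * F₂ᴴ)))
      ∧ (∀ γ : ℝ, 0 < γ →
        lamMax ((γmin ^ 2) • (F₁ * F₁ᴴ) + ((γmin⁻¹) ^ 2) • (F₂ * F₂ᴴ))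
          ≤ lamMax ((γ ^ 2) • (F₁ * F₁ᴴ) + ((γ⁻¹) ^ 2) • (F₂ * F₂ᴴ))) := by
  have hconv := convexOn_scaledGramLamMax F₁ F₂
  obtain ⟨γmin, hγmin, hmin⟩ := exists_isMinOn_Ioi_of_tendsto
    (hconv.continuousOn isOpen_Ioi) (tendsto_scaledGramLamMax_nhdsGT_zero hF₂)
    (tendsto_scaledGramLamMax_atTop hF₁)
  have hanti := hconv.antitoneOn_of_isMinOn hmin hγmin
  have hmono := hconv.monotoneOn_of_isMinOn hmin hγmin
  refine ⟨γmin, hγmin, fun γ₁ γ₂ h₁ h₁₂ h₂ => ?_, fun γ₁ γ₂ h₁ h₁₂ => ?_, fun γ hγ => hmin hγ⟩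
  · exact hanti ⟨h₁, h₁₂.trans h₂⟩ ⟨h₁.trans_le h₁₂, h₂⟩ h₁₂
  · have h₁pos : 0 < γ₁ := lt_of_lt_of_le hγmin h₁
    exact hmono ⟨h₁pos, h₁⟩ ⟨h₁pos.trans_le h₁₂, h₁.trans h₁₂⟩ h₁₂
end

section
/- Let X ∈ ℂ^{n×n} be Hermitian positive definite and T ∈ ℂ^{n×n} invertible. Then trace(T X⁻¹ Tᴴ) + trace(T⁻ᴴ X T⁻¹) ≥ 2n, with equality if and only if X = TᴴT. Consequently, among all invertible T, the trace of diag(T, T⁻ᴴ, I_m)·(D_s Ŵ(X,M) D_s)·diag(Tᴴ, T⁻¹, I_m), which equals trace(T X⁻¹ Tᴴ) + trace(T⁻ᴴ X T⁻¹) + (1/2)·trace(Dᴴ + D), is minimized exactly by those T with X = TᴴT, while the determinant of this congruence-transformed matrix is independent of T. -/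
/-!
With `P := T⁻ᴴ X T⁻¹`, which is positive definite with inverse `T X⁻¹ Tᴴ`, the trace sum is
`tr P + tr P⁻¹`. The matrix `P + P⁻¹ - 2 = (P - 1)ᴴ P⁻¹ (P - 1)` is positive semidefinite, so its
trace `tr P + tr P⁻¹ - 2n` is nonnegative, and it vanishes only if `P + P⁻¹ = 2`, i.e.
`(P - 1)ᴴ (P - 1) = P (P + P⁻¹ - 2) = 0`, i.e. `P = 1`, which means `X = TᴴT`. The congruence by
`G = diag(T, T⁻ᴴ, I)` multiplies the determinant by `det G · conj (det G) = 1`, since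
`det G = det T / conj (det T)`.
-/

open Matrix
open scoped ComplexOrder

/-- `D_s = diag(Iₙ, Iₙ, (1/√2)·I_m)`. -/
noncomputable def Dscale (n m : ℕ) :
    Matrix (Fin n ⊕ (Fin n ⊕ Fin m)) (Fin n ⊕ (Fin n ⊕ Fin m)) ℂ :=
  fromBlocks 1 0 0 (fromBlocks 1 0 0 ((((Real.sqrt 2)⁻¹ : ℝ) : ℂ) • 1))

/-- The matrix `Ŵ(X,M) = [[X⁻¹, A, B],[Aᴴ, X, Cᴴ],[Bᴴ, C, Dᴴ + D]]`. -/
noncomputable def What {n m : ℕ} (X A : Matrix (Fin n) (Fin n) ℂ)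
    (B : Matrix (Fin n) (Fin m) ℂ) (C : Matrix (Fin m) (Fin n) ℂ)
    (D : Matrix (Fin m) (Fin m) ℂ) :
    Matrix (Fin n ⊕ (Fin n ⊕ Fin m)) (Fin n ⊕ (Fin n ⊕ Fin m)) ℂ :=
  fromBlocks X⁻¹ (fromCols A B) (fromRows Aᴴ Bᴴ) (fromBlocks X Cᴴ C (Dᴴ + D))

/-- `diag(T, T⁻ᴴ, I_m)`. -/
noncomputable def Gmat {n : ℕ} (m : ℕ) (T : Matrix (Fin n) (Fin n) ℂ) :
    Matrix (Fin n ⊕ (Fin n ⊕ Fin m)) (Fin n ⊕ (Fin n ⊕ Fin m)) ℂ :=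
  fromBlocks T 0 0 (fromBlocks (T⁻¹)ᴴ 0 0 1)

namespace Matrix

theorem trace_fromBlocks {l m R : Type*} [Fintype l] [Fintype m] [AddCommMonoid R]
    (A : Matrix l l R) (B : Matrix l m R) (C : Matrix m l R) (D : Matrix m m R) :
    (fromBlocks A B C D).trace = A.trace + D.trace := by
  simp [trace, Fintype.sum_sum_type]

section

variable {ι R : Type*} [Fintype ι] [DecidableEq ι] [CommRing R] [StarRing R]

theorem inv_conjTranspose_mul_mul_inv {T : Matrix ι ι R} (hT : IsUnit T) (X : Matrix ι ι R) :
    ((T⁻¹)ᴴ * X * T⁻¹)⁻¹ = T * X⁻¹ * Tᴴ := by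
  have hdet := (isUnit_iff_isUnit_det T).mp hT
  rw [mul_inv_rev, mul_inv_rev, nonsing_inv_nonsing_inv T hdet, ← conjTranspose_nonsing_inv,
    nonsing_inv_nonsing_inv T hdet, Matrix.mul_assoc]

theorem conjTranspose_inv_mul_mul_inv_eq_one_iff {T : Matrix ι ι R} (hT : IsUnit T)
    (X : Matrix ι ι R) : (T⁻¹)ᴴ * X * T⁻¹ = 1 ↔ X = Tᴴ * T := by
  have hdet := (isUnit_iff_isUnit_det T).mp hT
  have hTT := mul_nonsing_inv T hdet
  have hTT' := nonsing_inv_mul T hdet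
  constructor
  · intro h
    calc X = (Tᴴ * (T⁻¹)ᴴ) * X * (T⁻¹ * T) := by
          rw [← conjTranspose_mul, hTT', conjTranspose_one, Matrix.one_mul, Matrix.mul_one]
      _ = Tᴴ * ((T⁻¹)ᴴ * X * T⁻¹) * T := by simp only [Matrix.mul_assoc]
      _ = Tᴴ * T := by rw [h, Matrix.mul_one]
  · rintro rfl
    calc (T⁻¹)ᴴ * (Tᴴ * T) * T⁻¹ = (T * T⁻¹)ᴴ * (T * T⁻¹) := by
          simp only [conjTranspose_mul, Matrix.mul_assoc]
      _ = 1 := by rw [hTT, conjTranspose_one, Matrix.one_mul]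

theorem PosDef.conjTranspose_inv_mul_mul_inv [PartialOrder R] {T X : Matrix ι ι R}
    (hX : X.PosDef) (hT : IsUnit T) : ((T⁻¹)ᴴ * X * T⁻¹).PosDef :=
  (isUnit_nonsing_inv_iff.mpr hT).posDef_star_left_conjugate_iff.mpr hX

end

theorem trace_add_sub_two_nsmul_one {ι R : Type*} [Fintype ι] [DecidableEq ι] [Ring R]
    (P Q : Matrix ι ι R) : (P + Q - 2 • 1).trace = P.trace + Q.trace - 2 * Fintype.card ι := by
  rw [trace_sub, trace_add, trace_smul, trace_one, nsmul_eq_mul, Nat.cast_ofNat]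

variable {ι 𝕜 : Type*} [Fintype ι] [DecidableEq ι] [RCLike 𝕜] {P : Matrix ι ι 𝕜}

theorem PosDef.posSemidef_add_inv_sub_two_nsmul_one (hP : P.PosDef) :
    (P + P⁻¹ - 2 • 1).PosSemidef := by
  have hdet := (isUnit_iff_isUnit_det P).mp hP.isUnit
  have hQ : (P - 1)ᴴ * P⁻¹ * (P - 1) = P + P⁻¹ - 2 • 1 := by
    rw [conjTranspose_sub, conjTranspose_one, hP.isHermitian.eq, two_smul]
    simp only [sub_mul, mul_sub, mul_nonsing_inv P hdet, nonsing_inv_mul P hdet, Matrix.one_mul,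
      Matrix.mul_one]
    abel
  exact hQ ▸ hP.inv.posSemidef.conjTranspose_mul_mul_same (P - 1)

theorem PosDef.add_inv_eq_two_nsmul_one_iff (hP : P.PosDef) : P + P⁻¹ = 2 • 1 ↔ P = 1 := by
  refine ⟨fun h => ?_, fun h => by rw [h, inv_one, two_smul]⟩
  have hPP := mul_nonsing_inv P ((isUnit_iff_isUnit_det P).mp hP.isUnit)
  have hsq : (P - 1)ᴴ * (P - 1) = P * (P + P⁻¹ - 2 • 1) := by
    rw [conjTranspose_sub, conjTranspose_one, hP.isHermitian.eq, two_smul]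
    simp only [sub_mul, mul_sub, mul_add, hPP, Matrix.one_mul, Matrix.mul_one]
    abel
  rwa [h, sub_self, Matrix.mul_zero, conjTranspose_mul_self_eq_zero, sub_eq_zero] at hsq

theorem PosDef.two_mul_card_le_trace_add_trace_inv (hP : P.PosDef) :
    (2 * Fintype.card ι : 𝕜) ≤ P.trace + P⁻¹.trace := by
  have h := hP.posSemidef_add_inv_sub_two_nsmul_one.trace_nonneg
  rwa [trace_add_sub_two_nsmul_one, sub_nonneg] at h

theorem PosDef.trace_add_trace_inv_eq_two_mul_card_iff (hP : P.PosDef) :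
    P.trace + P⁻¹.trace = 2 * Fintype.card ι ↔ P = 1 := by
  rw [← sub_eq_zero, ← trace_add_sub_two_nsmul_one,
    hP.posSemidef_add_inv_sub_two_nsmul_one.trace_eq_zero_iff, sub_eq_zero,
    hP.add_inv_eq_two_nsmul_one_iff]

end Matrix

theorem det_Gmat {n : ℕ} (m : ℕ) (T : Matrix (Fin n) (Fin n) ℂ) :
    (Gmat m T).det = T.det * (star T.det)⁻¹ := by
  rw [Gmat, det_fromBlocks_zero₂₁, det_fromBlocks_zero₂₁, det_one, mul_one, det_conjTranspose,
    det_nonsing_inv, Ring.inverse_eq_inv', star_inv₀]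

theorem det_Gmat_mul_mul_conjTranspose {n : ℕ} (m : ℕ) {T : Matrix (Fin n) (Fin n) ℂ}
    (hT : IsUnit T) (M : Matrix (Fin n ⊕ (Fin n ⊕ Fin m)) (Fin n ⊕ (Fin n ⊕ Fin m)) ℂ) :
    (Gmat m T * M * (Gmat m T)ᴴ).det = M.det := by
  have hdet : T.det ≠ 0 := ((isUnit_iff_isUnit_det T).mp hT).ne_zero
  have hstar : star T.det ≠ 0 := star_ne_zero.mpr hdet
  rw [det_mul, det_mul, det_conjTranspose, det_Gmat, star_mul', star_inv₀, star_star]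
  field_simp

theorem trace_Gmat_mul_Dscale_What_mul_Dscale_mul_conjTranspose {n m : ℕ}
    (X A : Matrix (Fin n) (Fin n) ℂ) (B : Matrix (Fin n) (Fin m) ℂ)
    (C : Matrix (Fin m) (Fin n) ℂ) (D : Matrix (Fin m) (Fin m) ℂ) (T : Matrix (Fin n) (Fin n) ℂ) :
    (Gmat m T * (Dscale n m * What X A B C D * Dscale n m) * (Gmat m T)ᴴ).trace
      = (T * X⁻¹ * Tᴴ).trace + ((T⁻¹)ᴴ * X * T⁻¹).trace + (1 / 2 : ℂ) * (Dᴴ + D).trace := by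
  have hs : (((Real.sqrt 2)⁻¹ : ℝ) : ℂ) * (((Real.sqrt 2)⁻¹ : ℝ) : ℂ) = 1 / 2 := by
    rw [← Complex.ofReal_mul, ← mul_inv, Real.mul_self_sqrt zero_le_two]
    norm_num
  simp only [Gmat, Dscale, What, fromBlocks_multiply, fromBlocks_conjTranspose, trace_fromBlocks,
    Matrix.mul_zero, Matrix.zero_mul, Matrix.mul_one, Matrix.one_mul, add_zero, zero_add,
    smul_zero, conjTranspose_zero, conjTranspose_one, conjTranspose_conjTranspose,
    Matrix.smul_mul, Matrix.mul_smul, smul_smul, hs, trace_smul, smul_eq_mul]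
  ring

/-- for `X ≻ 0` and invertible `T`,
`trace(TX⁻¹Tᴴ) + trace(T⁻ᴴXT⁻¹) ≥ 2n` with equality iff `X = TᴴT`; the trace of
`diag(T,T⁻ᴴ,I)·(D_sŴ(X,M)D_s)·diag(Tᴴ,T⁻¹,I)` equals
`trace(TX⁻¹Tᴴ) + trace(T⁻ᴴXT⁻¹) + (1/2)trace(Dᴴ+D)`, so it is minimized exactly by those
`T` with `X = TᴴT`, while the determinant of the transformed matrix is independent of `T`. -/
theorem stmt9 {n m : ℕ} (A : Matrix (Fin n) (Fin n) ℂ) (B : Matrix (Fin n) (Fin m) ℂ)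
    (C : Matrix (Fin m) (Fin n) ℂ) (D : Matrix (Fin m) (Fin m) ℂ)
    (X : Matrix (Fin n) (Fin n) ℂ) (hX : X.PosDef) :
    ∀ T : Matrix (Fin n) (Fin n) ℂ, IsUnit T →
      ((2 * n : ℂ) ≤ (T * X⁻¹ * Tᴴ).trace + ((T⁻¹)ᴴ * X * T⁻¹).trace)
      ∧ ((T * X⁻¹ * Tᴴ).trace + ((T⁻¹)ᴴ * X * T⁻¹).trace = (2 * n : ℂ) ↔ X = Tᴴ * T)
      ∧ (Gmat m T * (Dscale n m * What X A B C D * Dscale n m) * (Gmat m T)ᴴ).trace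
          = (T * X⁻¹ * Tᴴ).trace + ((T⁻¹)ᴴ * X * T⁻¹).trace + (1 / 2 : ℂ) * (Dᴴ + D).trace
      ∧ (Gmat m T * (Dscale n m * What X A B C D * Dscale n m) * (Gmat m T)ᴴ).det
          = (Dscale n m * What X A B C D * Dscale n m).det := by
  intro T hT
  have hP := hX.conjTranspose_inv_mul_mul_inv hT
  have hle := hP.two_mul_card_le_trace_add_trace_inv
  have heq := hP.trace_add_trace_inv_eq_two_mul_card_iff
  rw [inv_conjTranspose_mul_mul_inv hT, Fintype.card_fin, add_comm] at hle heq
  exact ⟨hle, heq.trans (conjTranspose_inv_mul_mul_inv_eq_one_iff hT X),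
    trace_Gmat_mul_Dscale_What_mul_Dscale_mul_conjTranspose X A B C D T,
    det_Gmat_mul_mul_conjTranspose m hT _⟩
end

section
/- Let M = (A,B,C,D) be a discrete-time system and let 0 ≤ ξ₋ < ξ₊ < 1. For ξ ∈ {ξ₋, ξ₊} let M_ξ := (A/(1−ξ), B/(1−ξ), C/(1−ξ), (D − ξI_m)/(1−ξ)). Then for every Hermitian Y ∈ ℂ^{n×n} with Y > 0 and W̃(Y, M_{ξ₊}) ≥ 0, one has W̃(Y, M_{ξ₋}) > 0. In particular, the solution set { Y Hermitian : Y > 0, W̃(Y, M_{ξ₊}) ≥ 0 } is contained in the solution set { Y Hermitian : Y > 0, W̃(Y, M_{ξ₋}) > 0 }. -/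
open Matrix
open scoped ComplexOrder

/-- The matrix `W̃(X,M) = [[X, XA, XB],[AᴴX, X, Cᴴ],[BᴴX, C, Dᴴ + D]]`. -/
noncomputable def Wtil {n m : ℕ} (X A : Matrix (Fin n) (Fin n) ℂ)
    (B : Matrix (Fin n) (Fin m) ℂ) (C : Matrix (Fin m) (Fin n) ℂ)
    (D : Matrix (Fin m) (Fin m) ℂ) :
    Matrix (Fin n ⊕ (Fin n ⊕ Fin m)) (Fin n ⊕ (Fin n ⊕ Fin m)) ℂ :=
  fromBlocks X (fromCols (X * A) (X * B)) (fromRows (Aᴴ * X) (Bᴴ * X))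
    (fromBlocks X Cᴴ C (Dᴴ + D))

/-!
Multiplying out the denominators, `(1 - ξ) • W̃(Y, M_ξ) = W̃(Y, M) - ξ • diag(Y, Y, 2I)` is affine
in `ξ`. Eliminating `W̃(Y, M)` between `ξ₋` and `ξ₊` gives
`(1 - ξ₋) • W̃(Y, M_{ξ₋}) = (1 - ξ₊) • W̃(Y, M_{ξ₊}) + (ξ₊ - ξ₋) • diag(Y, Y, 2I)`,
a positive semidefinite matrix plus a positive definite one when `Y > 0`.
-/

namespace Matrix

theorem PosDef.fromBlocks_zero {R p q : Type*} [Ring R] [PartialOrder R] [StarRing R]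
    [AddLeftMono R] [AddRightStrictMono R] [Fintype p] [Fintype q]
    {P : Matrix p p R} {Q : Matrix q q R} (hP : P.PosDef) (hQ : Q.PosDef) :
    (fromBlocks P 0 0 Q).PosDef := by
  refine .of_dotProduct_mulVec_pos (hP.1.fromBlocks (by simp) hQ.1) fun x hx => ?_
  rw [← Sum.elim_comp_inl_inr x, fromBlocks_mulVec, Function.star_sumElim,
    sumElim_dotProduct_sumElim]
  simp only [zero_mulVec, add_zero, zero_add]
  by_cases hl : x ∘ Sum.inl = 0
  · have hr : x ∘ Sum.inr ≠ 0 := fun hr =>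
      hx (by rw [← Sum.elim_comp_inl_inr x, hl, hr, Sum.elim_zero_zero])
    simpa [hl] using hQ.dotProduct_mulVec_pos hr
  · exact add_pos_of_pos_of_nonneg (hP.dotProduct_mulVec_pos hl)
      (hQ.posSemidef.dotProduct_mulVec_nonneg _)

end Matrix

/-- `W̃(X, M_ξ)` for the shifted system
`M_ξ = (A / (1 - ξ), B / (1 - ξ), C / (1 - ξ), (D - ξ I) / (1 - ξ))`. -/
noncomputable def shiftedWtil {n m : ℕ} (X A : Matrix (Fin n) (Fin n) ℂ)
    (B : Matrix (Fin n) (Fin m) ℂ) (C : Matrix (Fin m) (Fin n) ℂ)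
    (D : Matrix (Fin m) (Fin m) ℂ) (ξ : ℝ) :
    Matrix (Fin n ⊕ (Fin n ⊕ Fin m)) (Fin n ⊕ (Fin n ⊕ Fin m)) ℂ :=
  Wtil X ((1 - ξ)⁻¹ • A) ((1 - ξ)⁻¹ • B) ((1 - ξ)⁻¹ • C) ((1 - ξ)⁻¹ • (D - ξ • 1))

noncomputable def shiftDiag {n m : ℕ} (X : Matrix (Fin n) (Fin n) ℂ) :
    Matrix (Fin n ⊕ (Fin n ⊕ Fin m)) (Fin n ⊕ (Fin n ⊕ Fin m)) ℂ :=
  fromBlocks X 0 0 (fromBlocks X 0 0 ((2 : ℝ) • 1))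

theorem shiftDiag_posDef {n m : ℕ} {X : Matrix (Fin n) (Fin n) ℂ} (hX : X.PosDef) :
    (shiftDiag (m := m) X).PosDef :=
  hX.fromBlocks_zero (hX.fromBlocks_zero (PosDef.one.smul two_pos))

theorem smul_shiftedWtil {n m : ℕ} (X A : Matrix (Fin n) (Fin n) ℂ)
    (B : Matrix (Fin n) (Fin m) ℂ) (C : Matrix (Fin m) (Fin n) ℂ)
    (D : Matrix (Fin m) (Fin m) ℂ) {ξ : ℝ} (hξ : ξ ≠ 1) :
    (1 - ξ) • shiftedWtil X A B C D ξ = Wtil X A B C D - ξ • shiftDiag X := by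
  have h : (1 - ξ : ℂ) ≠ 0 := sub_ne_zero.mpr (by exact_mod_cast hξ.symm)
  ext (i | i | i) (j | j | j) <;>
    simp only [shiftedWtil, Wtil, shiftDiag, fromBlocks_apply₁₁, fromBlocks_apply₁₂,
      fromBlocks_apply₂₁, fromBlocks_apply₂₂, fromCols_apply_inl, fromCols_apply_inr,
      fromRows_apply_inl, fromRows_apply_inr, Matrix.add_apply, Matrix.sub_apply, Matrix.smul_apply,
      Matrix.zero_apply, one_apply, Matrix.mul_smul, Matrix.smul_mul, conjTranspose_smul,
      conjTranspose_sub, conjTranspose_one, conjTranspose_apply, star_trivial, RCLike.star_def,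
      Complex.real_smul, Complex.ofReal_inv, Complex.ofReal_sub, Complex.ofReal_one,
      Complex.ofReal_ofNat, smul_ite, smul_add, smul_zero, sub_zero, mul_one] <;>
    field_simp
  split_ifs <;> ring

theorem shiftedWtil_posDef_of_posSemidef {n m : ℕ} (A : Matrix (Fin n) (Fin n) ℂ)
    (B : Matrix (Fin n) (Fin m) ℂ) (C : Matrix (Fin m) (Fin n) ℂ)
    (D : Matrix (Fin m) (Fin m) ℂ) {Y : Matrix (Fin n) (Fin n) ℂ} (hY : Y.PosDef)
    {ξm ξp : ℝ} (hmp : ξm < ξp) (hp1 : ξp < 1)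
    (hW : (shiftedWtil Y A B C D ξp).PosSemidef) : (shiftedWtil Y A B C D ξm).PosDef := by
  have hm1 : ξm < 1 := hmp.trans hp1
  have hcombo : (1 - ξm) • shiftedWtil Y A B C D ξm =
      (1 - ξp) • shiftedWtil Y A B C D ξp + (ξp - ξm) • shiftDiag Y := by
    rw [smul_shiftedWtil _ _ _ _ _ hm1.ne, smul_shiftedWtil _ _ _ _ _ hp1.ne]
    module
  have hpos : ((1 - ξm) • shiftedWtil Y A B C D ξm).PosDef := hcombo ▸
    .posSemidef_add (hW.smul (sub_nonneg.mpr hp1.le))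
      ((shiftDiag_posDef hY).smul (sub_pos.mpr hmp))
  simpa [smul_smul, inv_mul_cancel₀ (sub_pos.mpr hm1).ne'] using
    hpos.smul (inv_pos.mpr (sub_pos.mpr hm1))

theorem stmt14_general {n m : ℕ} (A : Matrix (Fin n) (Fin n) ℂ) (B : Matrix (Fin n) (Fin m) ℂ)
    (C : Matrix (Fin m) (Fin n) ℂ) (D : Matrix (Fin m) (Fin m) ℂ)
    (ξm ξp : ℝ) (hmp : ξm < ξp) (hp1 : ξp < 1) :
    (∀ Y : Matrix (Fin n) (Fin n) ℂ, Y.PosDef →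
      (Wtil Y ((1 - ξp)⁻¹ • A) ((1 - ξp)⁻¹ • B) ((1 - ξp)⁻¹ • C)
        ((1 - ξp)⁻¹ • (D - ξp • (1 : Matrix (Fin m) (Fin m) ℂ)))).PosSemidef →
      (Wtil Y ((1 - ξm)⁻¹ • A) ((1 - ξm)⁻¹ • B) ((1 - ξm)⁻¹ • C)
        ((1 - ξm)⁻¹ • (D - ξm • (1 : Matrix (Fin m) (Fin m) ℂ)))).PosDef)
    ∧ {Y : Matrix (Fin n) (Fin n) ℂ | Y.PosDef ∧
        (Wtil Y ((1 - ξp)⁻¹ • A) ((1 - ξp)⁻¹ • B) ((1 - ξp)⁻¹ • C)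
          ((1 - ξp)⁻¹ • (D - ξp • (1 : Matrix (Fin m) (Fin m) ℂ)))).PosSemidef}
      ⊆ {Y : Matrix (Fin n) (Fin n) ℂ | Y.PosDef ∧
        (Wtil Y ((1 - ξm)⁻¹ • A) ((1 - ξm)⁻¹ • B) ((1 - ξm)⁻¹ • C)
          ((1 - ξm)⁻¹ • (D - ξm • (1 : Matrix (Fin m) (Fin m) ℂ)))).PosDef} := by
  have key : ∀ Y : Matrix (Fin n) (Fin n) ℂ, Y.PosDef →
      (shiftedWtil Y A B C D ξp).PosSemidef → (shiftedWtil Y A B C D ξm).PosDef :=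
    fun _ hY => shiftedWtil_posDef_of_posSemidef A B C D hY hmp hp1
  exact ⟨key, fun Y ⟨hY, hW⟩ => ⟨hY, key Y hY hW⟩⟩

/-- for `0 ≤ ξ₋ < ξ₊ < 1`, every Hermitian `Y > 0` with
`W̃(Y, M_{ξ₊}) ≥ 0` satisfies `W̃(Y, M_{ξ₋}) > 0`; in particular the corresponding
solution sets are nested. -/
theorem stmt14 {n m : ℕ} (A : Matrix (Fin n) (Fin n) ℂ) (B : Matrix (Fin n) (Fin m) ℂ)
    (C : Matrix (Fin m) (Fin n) ℂ) (D : Matrix (Fin m) (Fin m) ℂ)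
    (ξm ξp : ℝ) (h0 : 0 ≤ ξm) (hmp : ξm < ξp) (hp1 : ξp < 1) :
    (∀ Y : Matrix (Fin n) (Fin n) ℂ, Y.PosDef →
      (Wtil Y ((1 - ξp)⁻¹ • A) ((1 - ξp)⁻¹ • B) ((1 - ξp)⁻¹ • C)
        ((1 - ξp)⁻¹ • (D - ξp • (1 : Matrix (Fin m) (Fin m) ℂ)))).PosSemidef →
      (Wtil Y ((1 - ξm)⁻¹ • A) ((1 - ξm)⁻¹ • B) ((1 - ξm)⁻¹ • C)
        ((1 - ξm)⁻¹ • (D - ξm • (1 : Matrix (Fin m) (Fin m) ℂ)))).PosDef)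
    ∧ {Y : Matrix (Fin n) (Fin n) ℂ | Y.PosDef ∧
        (Wtil Y ((1 - ξp)⁻¹ • A) ((1 - ξp)⁻¹ • B) ((1 - ξp)⁻¹ • C)
          ((1 - ξp)⁻¹ • (D - ξp • (1 : Matrix (Fin m) (Fin m) ℂ)))).PosSemidef}
      ⊆ {Y : Matrix (Fin n) (Fin n) ℂ | Y.PosDef ∧
        (Wtil Y ((1 - ξm)⁻¹ • A) ((1 - ξm)⁻¹ • B) ((1 - ξm)⁻¹ • C)
          ((1 - ξm)⁻¹ • (D - ξm • (1 : Matrix (Fin m) (Fin m) ℂ)))).PosDef} :=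
  stmt14_general A B C D ξm ξp hmp hp1
end
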